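/- arXiv:1410.0500 — 5 statements merged into one kernel-verified Lean document; each statement's English description precedes it below -/
import Mathlib

section
/- Let (a_n) be a sequence of positive real numbers with lim sup a_n < ∞. Suppose there exist constants λ > 0, 0 < C₁ < 1, C₂ > 0 and an index n̂ such that for all n ≥ n̂ one has a_n ≤ C₁ a_{n+1} + C₂ 2^{-λ n}. Then for all n ≥ n̂, a_n ≤ (C₂/(1−C₁)) 2^{-λ n}. -/
open Filter

theorem stmt_0 (a : ℕ → ℝ) (ha : ∀ n, 0 < a n)
    (hbdd : Filter.limsup (fun n => (a n : EReal)) Filter.atTop < ⊤)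
    (lam C₁ C₂ : ℝ) (hlam : 0 < lam) (hC₁ : 0 < C₁) (hC₁' : C₁ < 1) (hC₂ : 0 < C₂)
    (nhat : ℕ)
    (hrec : ∀ n ≥ nhat, a n ≤ C₁ * a (n + 1) + C₂ * (2 : ℝ) ^ (-(lam * n))) :
    ∀ n ≥ nhat, a n ≤ C₂ / (1 - C₁) * (2 : ℝ) ^ (-(lam * n)) := by
  -- get an eventual bound M with a n ≤ M for n ≥ N
  obtain ⟨c, hc1, hc2⟩ := exists_between hbdd
  have hev : ∀ᶠ n in atTop, (a n : EReal) < c :=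
    Filter.eventually_lt_of_limsup_lt hc1
  obtain ⟨N, hN⟩ := hev.exists_forall_of_atTop
  have hcbot : c ≠ ⊥ := by
    intro h
    have := hN N le_rfl
    rw [h] at this
    exact (EReal.bot_lt_coe (a N)).not_gt this
  set M := c.toReal with hM
  have hbound : ∀ n ≥ N, a n ≤ M := by
    intro n hn
    have h := hN n hn
    have : (a n : EReal) < (M : EReal) := by
      rwa [hM, EReal.coe_toReal hc2.ne hcbot]
    exact (EReal.coe_lt_coe_iff.mp this).le
  -- iterated recursion
  have hit : ∀ k : ℕ, ∀ n ≥ nhat,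
      a n ≤ C₁ ^ k * a (n + k) +
        C₂ * ∑ j ∈ Finset.range k, C₁ ^ j * (2 : ℝ) ^ (-(lam * (n + j : ℕ))) := by
    intro k
    induction k with
    | zero => intro n hn; simp
    | succ k ih =>
      intro n hn
      have h1 := hrec n hn
      have h2 := ih (n + 1) (le_trans hn (Nat.le_succ n))
      have key : a n ≤ C₁ * (C₁ ^ k * a (n + 1 + k) +
          C₂ * ∑ j ∈ Finset.range k, C₁ ^ j * (2 : ℝ) ^ (-(lam * (n + 1 + j : ℕ))))
          + C₂ * (2 : ℝ) ^ (-(lam * n)) := by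
        refine h1.trans ?_
        gcongr
      refine key.trans (le_of_eq ?_)
      have harr : n + 1 + k = n + (k + 1) := by ring
      rw [harr, Finset.sum_range_succ']
      have hcongr : ∀ j ∈ Finset.range k,
          C₁ ^ (j + 1) * (2:ℝ) ^ (-(lam * ((n + (j + 1) : ℕ) : ℝ))) =
          C₁ * (C₁ ^ j * (2:ℝ) ^ (-(lam * ((n + 1 + j : ℕ) : ℝ)))) := by
        intro j _
        rw [show n + (j + 1) = n + 1 + j by ring, pow_succ]
        ring
      rw [Finset.sum_congr rfl hcongr, ← Finset.mul_sum]
      simp only [pow_zero, one_mul, Nat.add_zero]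
      ring
  -- bound the sum
  have hsum : ∀ k : ℕ, ∀ n : ℕ,
      ∑ j ∈ Finset.range k, C₁ ^ j * (2 : ℝ) ^ (-(lam * (n + j : ℕ)))
        ≤ (1 / (1 - C₁)) * (2 : ℝ) ^ (-(lam * n)) := by
    intro k n
    have step : ∀ j ∈ Finset.range k,
        C₁ ^ j * (2 : ℝ) ^ (-(lam * (n + j : ℕ))) ≤ C₁ ^ j * (2 : ℝ) ^ (-(lam * n)) := by
      intro j _
      have h2 : (2 : ℝ) ^ (-(lam * (n + j : ℕ))) ≤ (2 : ℝ) ^ (-(lam * n)) := by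
        apply Real.rpow_le_rpow_left_iff (x := 2) (by norm_num) |>.mpr
        push_cast
        nlinarith [hlam.le, Nat.cast_nonneg (α := ℝ) j]
      exact mul_le_mul_of_nonneg_left h2 (pow_nonneg hC₁.le j)
    calc ∑ j ∈ Finset.range k, C₁ ^ j * (2 : ℝ) ^ (-(lam * (n + j : ℕ)))
        ≤ ∑ j ∈ Finset.range k, C₁ ^ j * (2 : ℝ) ^ (-(lam * n)) :=
          Finset.sum_le_sum step
      _ = (∑ j ∈ Finset.range k, C₁ ^ j) * (2 : ℝ) ^ (-(lam * n)) := by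
          rw [← Finset.sum_mul]
      _ ≤ (1 / (1 - C₁)) * (2 : ℝ) ^ (-(lam * n)) := by
          apply mul_le_mul_of_nonneg_right _ (Real.rpow_nonneg (by norm_num) _)
          have h1C : (0:ℝ) < 1 - C₁ := by linarith
          have heq : (C₁ ^ k - 1) / (C₁ - 1) = (1 - C₁ ^ k) / (1 - C₁) := by
            rw [div_eq_div_iff (by linarith) h1C.ne']; ring
          rw [geom_sum_eq hC₁'.ne k, heq, div_le_div_iff₀ h1C h1C]
          nlinarith [pow_nonneg hC₁.le k]
  -- conclude
  intro n hn
  have key : ∀ k ≥ N, a n ≤ C₁ ^ k * M + C₂ / (1 - C₁) * (2:ℝ) ^ (-(lam * n)) := by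
    intro k hk
    have h1 := hit k n hn
    have h2 := hbound (n + k) (le_trans hk (Nat.le_add_left k n))
    have h3 := hsum k n
    calc a n ≤ C₁ ^ k * a (n + k) +
          C₂ * ∑ j ∈ Finset.range k, C₁ ^ j * (2 : ℝ) ^ (-(lam * (n + j : ℕ))) := h1
      _ ≤ C₁ ^ k * M + C₂ * ((1 / (1 - C₁)) * (2:ℝ) ^ (-(lam * n))) := by
          gcongr
      _ = C₁ ^ k * M + C₂ / (1 - C₁) * (2:ℝ) ^ (-(lam * n)) := by ring
  have htend : Tendsto (fun k : ℕ => C₁ ^ k * M + C₂ / (1 - C₁) * (2:ℝ) ^ (-(lam*n))) atTop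
      (nhds (C₂ / (1 - C₁) * (2:ℝ) ^ (-(lam*n)))) := by
    have := (tendsto_pow_atTop_nhds_zero_of_lt_one hC₁.le hC₁').mul_const M
    simpa using this.add_const (C₂ / (1 - C₁) * (2:ℝ) ^ (-(lam*n)))
  exact ge_of_tendsto htend (eventually_atTop.mpr ⟨N, key⟩)
end

section
/- Let (a_n) be a sequence of positive real numbers with lim sup a_n < ∞. Suppose there exist constants λ > 0, 0 < C₁ < 1, C₂ > 0 and an index n̂ such that for all n ≥ n̂ one has a_n ≤ C₁ a_{n+2} + C₂ 2^{-λ n}. Then for all n ≥ n̂, a_n ≤ (C₂/(1−C₁)) 2^{-λ n}. -/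
open Filter

theorem stmt_1 (a : ℕ → ℝ) (ha : ∀ n, 0 < a n)
    (hbdd : Filter.limsup (fun n => (a n : EReal)) Filter.atTop < ⊤)
    (lam C₁ C₂ : ℝ) (hlam : 0 < lam) (hC₁ : 0 < C₁) (hC₁' : C₁ < 1) (hC₂ : 0 < C₂)
    (nhat : ℕ)
    (hrec : ∀ n ≥ nhat, a n ≤ C₁ * a (n + 2) + C₂ * (2 : ℝ) ^ (-(lam * n))) :
    ∀ n ≥ nhat, a n ≤ C₂ / (1 - C₁) * (2 : ℝ) ^ (-(lam * n)) := by
  -- get a real bound M with a n ≤ M eventually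
  obtain ⟨M, hM, -⟩ := EReal.lt_iff_exists_real_btwn.mp hbdd
  have hev : ∀ᶠ n in atTop, a n < M := by
    have := Filter.eventually_lt_of_limsup_lt hM
    filter_upwards [this] with n hn
    exact_mod_cast hn
  -- key iterated bound
  have key : ∀ k : ℕ, ∀ n ≥ nhat,
      a n ≤ C₁ ^ k * a (n + 2 * k)
        + C₂ * (2 : ℝ) ^ (-(lam * n)) * ∑ j ∈ Finset.range k, C₁ ^ j := by
    intro k
    induction k with
    | zero => intro n hn; simp
    | succ k ih =>
      intro n hn
      have h1 := hrec n hn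
      have h2 := ih (n + 2) (le_trans hn (by omega))
      have hpow : (2 : ℝ) ^ (-(lam * ((n : ℝ) + 2))) ≤ (2 : ℝ) ^ (-(lam * n)) := by
        apply Real.rpow_le_rpow_of_exponent_le one_le_two
        nlinarith [hlam.le]
      have hposn : (0 : ℝ) < (2 : ℝ) ^ (-(lam * n)) := Real.rpow_pos_of_pos two_pos _
      have h2' : a (n + 2) ≤ C₁ ^ k * a (n + 2 + 2 * k)
          + C₂ * (2 : ℝ) ^ (-(lam * n)) * ∑ j ∈ Finset.range k, C₁ ^ j := by
        refine le_trans h2 ?_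
        have hsum : (0 : ℝ) ≤ ∑ j ∈ Finset.range k, C₁ ^ j :=
          Finset.sum_nonneg fun j _ => pow_nonneg hC₁.le j
        have hcast : ((n + 2 : ℕ) : ℝ) = (n : ℝ) + 2 := by push_cast; ring
        rw [hcast]
        gcongr
      have hre : n + 2 + 2 * k = n + 2 * (k + 1) := by omega
      rw [hre] at h2'
      calc a n ≤ C₁ * a (n + 2) + C₂ * (2 : ℝ) ^ (-(lam * n)) := h1
        _ ≤ C₁ * (C₁ ^ k * a (n + 2 * (k + 1))
              + C₂ * (2 : ℝ) ^ (-(lam * n)) * ∑ j ∈ Finset.range k, C₁ ^ j)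
              + C₂ * (2 : ℝ) ^ (-(lam * n)) := by nlinarith [h2']
        _ = C₁ ^ (k + 1) * a (n + 2 * (k + 1))
              + C₂ * (2 : ℝ) ^ (-(lam * n)) * ∑ j ∈ Finset.range (k + 1), C₁ ^ j := by
            rw [geom_sum_succ]; ring
  intro n hn
  have hsumle : ∀ k : ℕ, (∑ j ∈ Finset.range k, C₁ ^ j) ≤ 1 / (1 - C₁) := by
    intro k
    have h1 : (0 : ℝ) < 1 - C₁ := by linarith
    rw [le_div_iff₀ h1]
    nlinarith [geom_sum_mul C₁ k, pow_nonneg hC₁.le k]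
  have hposn : (0 : ℝ) < (2 : ℝ) ^ (-(lam * n)) := Real.rpow_pos_of_pos two_pos _
  -- a n ≤ C₁^k * a (n + 2k) + C₂/(1-C₁) * 2^(-λn) for all k
  have hbound : ∀ k : ℕ, a n ≤ C₁ ^ k * a (n + 2 * k)
      + C₂ / (1 - C₁) * (2 : ℝ) ^ (-(lam * n)) := by
    intro k
    have := key k n hn
    have hs := hsumle k
    have hCp : (0 : ℝ) < C₂ * (2 : ℝ) ^ (-(lam * n)) := mul_pos hC₂ hposn
    have : C₂ * (2 : ℝ) ^ (-(lam * n)) * ∑ j ∈ Finset.range k, C₁ ^ j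
        ≤ C₂ * (2 : ℝ) ^ (-(lam * n)) * (1 / (1 - C₁)) :=
      mul_le_mul_of_nonneg_left hs hCp.le
    calc a n ≤ _ := key k n hn
      _ ≤ C₁ ^ k * a (n + 2 * k) + C₂ * (2 : ℝ) ^ (-(lam * n)) * (1 / (1 - C₁)) := by
          linarith
      _ = C₁ ^ k * a (n + 2 * k) + C₂ / (1 - C₁) * (2 : ℝ) ^ (-(lam * n)) := by ring
  -- C₁^k * a (n + 2k) → 0
  have htend : Tendsto (fun k : ℕ => C₁ ^ k * a (n + 2 * k)) atTop (nhds 0) := by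
    have hMtend : Tendsto (fun k : ℕ => C₁ ^ k * M) atTop (nhds 0) := by
      have := tendsto_pow_atTop_nhds_zero_of_lt_one hC₁.le hC₁'
      simpa using this.mul_const M
    apply squeeze_zero_norm' _ (by simpa using hMtend.norm)
    obtain ⟨N, hN⟩ := eventually_atTop.mp hev
    filter_upwards [eventually_atTop.2 ⟨N, fun k hk => hk⟩] with k hk
    have h1 : a (n + 2 * k) < M := hN _ (by omega)
    have h2 : 0 < a (n + 2 * k) := ha _
    have hMpos : 0 < M := lt_trans h2 h1
    rw [Real.norm_eq_abs, abs_of_nonneg (by positivity), abs_of_pos hC₁, abs_of_pos hMpos]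
    exact mul_le_mul_of_nonneg_left h1.le (pow_nonneg hC₁.le k)
  have : Tendsto (fun k : ℕ => C₁ ^ k * a (n + 2 * k)
      + C₂ / (1 - C₁) * (2 : ℝ) ^ (-(lam * n))) atTop
      (nhds (C₂ / (1 - C₁) * (2 : ℝ) ^ (-(lam * n)))) := by
    simpa using htend.add_const (C₂ / (1 - C₁) * (2 : ℝ) ^ (-(lam * n)))
  exact ge_of_tendsto this (Eventually.of_forall hbound)
end

section
/- Suppose (a_n) is a sequence of positive reals, 0 < C₁ < 1, C₂ > 0, λ > 0, and for some index n̄ we have a_{n̄} > (C₂/(1−C₁)) 2^{-λ n̄} and a_n ≤ C₁ a_{n+1} + C₂ 2^{-λ n} for all n ≥ n̄. Then there exists a constant k > 1 such that a_{n̄+j+1}/a_{n̄+j} ≥ k for all j ≥ 0; in particular a_n → ∞. -/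
theorem stmt_2 (a : ℕ → ℝ) (ha : ∀ n, 0 < a n)
    (lam C₁ C₂ : ℝ) (hlam : 0 < lam) (hC₁ : 0 < C₁) (hC₁' : C₁ < 1) (hC₂ : 0 < C₂)
    (nbar : ℕ)
    (hbig : a nbar > C₂ / (1 - C₁) * (2 : ℝ) ^ (-(lam * nbar)))
    (hrec : ∀ n ≥ nbar, a n ≤ C₁ * a (n + 1) + C₂ * (2 : ℝ) ^ (-(lam * n))) :
    (∃ k : ℝ, 1 < k ∧ ∀ j : ℕ, k ≤ a (nbar + j + 1) / a (nbar + j)) ∧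
      Filter.Tendsto a Filter.atTop Filter.atTop := by
  set t₀ : ℝ := (2 : ℝ) ^ (-(lam * nbar)) with ht₀
  have ht₀pos : 0 < t₀ := Real.rpow_pos_of_pos (by norm_num) _
  set k : ℝ := (1 - C₂ * t₀ / a nbar) / C₁ with hk
  have ha0 := ha nbar
  have h1C₁ : 0 < 1 - C₁ := by linarith
  have hb : C₂ * t₀ < a nbar * (1 - C₁) := by
    have hb0 : C₂ * t₀ / (1 - C₁) < a nbar := by
      rw [div_mul_eq_mul_div] at hbig; exact hbig
    rwa [div_lt_iff₀ h1C₁] at hb0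
  -- 1 < k
  have hk1 : 1 < k := by
    rw [hk, lt_div_iff₀ hC₁, one_mul]
    have h3 : C₂ * t₀ / a nbar < 1 - C₁ := by
      rw [div_lt_iff₀ ha0]; nlinarith
    linarith
  -- exponent monotonicity
  have htle : ∀ j : ℕ, (2 : ℝ) ^ (-(lam * (nbar + j : ℕ))) ≤ t₀ := by
    intro j
    apply Real.rpow_le_rpow_of_exponent_le (by norm_num)
    have : (nbar : ℝ) ≤ ((nbar + j : ℕ) : ℝ) := by
      push_cast; linarith [Nat.cast_nonneg (α := ℝ) j]
    nlinarith [hlam.le]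
  -- main induction
  have main : ∀ j : ℕ, a nbar ≤ a (nbar + j) ∧ k * a (nbar + j) ≤ a (nbar + j + 1) := by
    intro j
    induction j with
    | zero =>
      refine ⟨by simp, ?_⟩
      have hr := hrec nbar le_rfl
      have h2 : a nbar - C₂ * t₀ ≤ C₁ * a (nbar + 1) := by linarith
      have hke : k * a (nbar + 0) = (a nbar - C₂ * t₀) / C₁ := by
        rw [hk]; field_simp; ring
      rw [hke, div_le_iff₀ hC₁]
      have : a (nbar + 0 + 1) = a (nbar + 1) := by norm_num
      rw [this]; linarith
    | succ j ih =>
      obtain ⟨ih1, ih2⟩ := ih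
      have hmono : a nbar ≤ a (nbar + (j + 1)) := by
        have h4 : a nbar ≤ k * a (nbar + j) := by
          nlinarith [ha (nbar + j)]
        exact h4.trans ih2
      refine ⟨hmono, ?_⟩
      have hr := hrec (nbar + (j + 1)) (Nat.le_add_right _ _)
      have hstep : a (nbar + (j + 1)) - C₂ * (2 : ℝ) ^ (-(lam * (nbar + (j+1) : ℕ))) ≤
          C₁ * a (nbar + (j + 1) + 1) := by linarith [hr]
      have hle := htle (j + 1)
      rw [hk, div_mul_eq_mul_div, div_le_iff₀ hC₁]
      have key : (1 - C₂ * t₀ / a nbar) * a (nbar + (j + 1)) ≤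
          a (nbar + (j + 1)) - C₂ * (2 : ℝ) ^ (-(lam * (nbar + (j+1) : ℕ))) := by
        have h1 : C₂ * (2 : ℝ) ^ (-(lam * (nbar + (j+1) : ℕ))) ≤ C₂ * t₀ := by
          nlinarith
        have h2 : C₂ * t₀ ≤ C₂ * t₀ / a nbar * a (nbar + (j + 1)) := by
          rw [div_mul_eq_mul_div, le_div_iff₀ ha0]
          nlinarith [mul_pos hC₂ ht₀pos, hmono]
        nlinarith
      linarith [key, hstep]
  have hkpos : 0 < k := lt_trans one_pos hk1
  constructor
  · refine ⟨k, hk1, fun j => ?_⟩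
    rw [le_div_iff₀ (ha (nbar + j))]
    exact (main j).2
  · have pow : ∀ j : ℕ, k ^ j * a nbar ≤ a (nbar + j) := by
      intro j
      induction j with
      | zero => simp
      | succ j ih =>
        have h2 := (main j).2
        calc k ^ (j + 1) * a nbar = k * (k ^ j * a nbar) := by ring
        _ ≤ k * a (nbar + j) := by nlinarith
        _ ≤ a (nbar + j + 1) := h2
    have hgrow : ∀ n ≥ nbar, k ^ (n - nbar) * a nbar ≤ a n := by
      intro n hn
      have := pow (n - nbar)
      rwa [Nat.add_sub_cancel' hn] at this
    refine Filter.tendsto_atTop_mono' Filter.atTop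
      (Filter.eventually_atTop.2 ⟨nbar, hgrow⟩) ?_
    have h1 : Filter.Tendsto (fun n : ℕ => k ^ (n - nbar)) Filter.atTop Filter.atTop :=
      (tendsto_pow_atTop_atTop_of_one_lt hk1).comp (Filter.tendsto_sub_atTop_nat nbar)
    exact h1.atTop_mul_const ha0
end

section
/- Let u₀ : [0,δ] → ℝ be continuous, u₁ : [0,δ] → ℝ continuous and nonnegative, w : [0,δ] → ℝ continuous with w(0)=0, and σ ≥ 0, and suppose u₀(t) = u₀(0) − ∫₀ᵗ u₀(s)u₁(s) ds + σ w(t) for all t ∈ [0,δ]. Then for all t ∈ [0,δ], |u₀(t)| ≤ |u₀(0)| + 2σ sup_{s∈[0,δ]} |w(s)|. -/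
/-!
On a stretch where `u ≥ 0` the damping term `-∫ u k` (with `k ≥ 0`) can only decrease `u`, so
there `u` rises by at most the oscillation of the forcing `v`. Given `t` with `u t > 0`, take the
last zero `a` of `u` before `t` (or `a = 0` if there is none): then `u a ≤ |u 0|` and `u ≥ 0` on
`[a, t]`, whence `u t ≤ |u 0| + (v t - v a)`. The lower bound follows by symmetry `u ↦ -u`.
-/

open intervalIntegral Set

theorem ContinuousOn.exists_nonneg_on_Icc_of_nonneg_right {f : ℝ → ℝ} {a b : ℝ}
    (hf : ContinuousOn f (Icc a b)) (hab : a ≤ b) (hb : 0 ≤ f b) :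
    ∃ c ∈ Icc a b, (c = a ∨ f c = 0) ∧ ∀ s ∈ Icc c b, 0 ≤ f s := by
  set Z := {a} ∪ Icc a b ∩ f ⁻¹' {0}
  have hZ_compact : IsCompact Z := by
    refine (isCompact_Icc (a := a) (b := b)).of_isClosed_subset ?_ ?_
    · exact isClosed_singleton.union
        (hf.preimage_isClosed_of_isClosed isClosed_Icc isClosed_singleton)
    · exact union_subset (singleton_subset_iff.2 ⟨le_rfl, hab⟩) inter_subset_left
  obtain ⟨c, hcZ, hc_max⟩ := hZ_compact.exists_isGreatest (singleton_nonempty a).inl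
  have hc : c ∈ Icc a b := by
    rcases hcZ with rfl | ⟨hc, -⟩
    exacts [⟨le_rfl, hab⟩, hc]
  refine ⟨c, hc, hcZ.imp id And.right, fun s hs => ?_⟩
  by_contra! hneg
  obtain ⟨z, hz, hfz⟩ := intermediate_value_Icc hs.2
    (hf.mono (Icc_subset_Icc (hc.1.trans hs.1) le_rfl)) ⟨hneg.le, hb⟩
  have hzc : z ≤ c := hc_max (Or.inr ⟨⟨hc.1.trans (hs.1.trans hz.1), hz.2⟩, hfz⟩)
  have hzs : z = s := le_antisymm (hzc.trans hs.1) hz.1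
  exact hneg.ne (hzs ▸ hfz)

section IntegralEquation

variable {δ C : ℝ} {u k v : ℝ → ℝ}

theorem eq_sub_integral_add_sub_of_forall_eq {g : ℝ → ℝ} (hg : ContinuousOn g (Icc 0 δ))
    (h : ∀ t ∈ Icc 0 δ, u t = u 0 - (∫ s in (0:ℝ)..t, g s) + v t)
    {a t : ℝ} (ha : a ∈ Icc 0 δ) (ht : t ∈ Icc 0 δ) :
    u t = u a - (∫ s in a..t, g s) + (v t - v a) := by
  have hint : ∀ x ∈ Icc 0 δ, IntervalIntegrable g MeasureTheory.volume 0 x := fun x hx =>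
    (hg.mono (uIcc_subset_Icc ⟨le_rfl, ha.1.trans ha.2⟩ hx)).intervalIntegrable
  rw [← integral_interval_sub_left (hint t ht) (hint a ha)]
  linarith [h t ht, h a ha]

theorem le_abs_add_of_forall_eq_sub_integral_mul (hu : ContinuousOn u (Icc 0 δ))
    (hk : ContinuousOn k (Icc 0 δ)) (hk_nonneg : ∀ s ∈ Icc 0 δ, 0 ≤ k s)
    (hv : ∀ r ∈ Icc 0 δ, ∀ s ∈ Icc 0 δ, v s - v r ≤ C)
    (h : ∀ t ∈ Icc 0 δ, u t = u 0 - (∫ s in (0:ℝ)..t, u s * k s) + v t)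
    {t : ℝ} (ht : t ∈ Icc 0 δ) : u t ≤ |u 0| + C := by
  rcases le_or_gt (u t) 0 with hut | hut
  · linarith [abs_nonneg (u 0), hv t ht t ht]
  obtain ⟨a, ha, ha_start, hu_nonneg⟩ :=
    (hu.mono (Icc_subset_Icc_right ht.2)).exists_nonneg_on_Icc_of_nonneg_right ht.1 hut.le
  have haδ : a ∈ Icc 0 δ := ⟨ha.1, ha.2.trans ht.2⟩
  have hua : u a ≤ |u 0| := by
    rcases ha_start with rfl | hua
    exacts [le_abs_self _, hua.symm ▸ abs_nonneg _]
  have hdamping : 0 ≤ ∫ s in a..t, u s * k s := integral_nonneg ha.2 fun s hs =>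
    mul_nonneg (hu_nonneg s hs) (hk_nonneg s ⟨ha.1.trans hs.1, hs.2.trans ht.2⟩)
  have hstep : u t = u a - (∫ s in a..t, u s * k s) + (v t - v a) :=
    eq_sub_integral_add_sub_of_forall_eq (hu.mul hk) h haδ ht
  linarith [hv a haδ t ht]

theorem abs_le_abs_add_of_forall_eq_sub_integral_mul (hu : ContinuousOn u (Icc 0 δ))
    (hk : ContinuousOn k (Icc 0 δ)) (hk_nonneg : ∀ s ∈ Icc 0 δ, 0 ≤ k s)
    (hv : ∀ r ∈ Icc 0 δ, ∀ s ∈ Icc 0 δ, |v s - v r| ≤ C)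
    (h : ∀ t ∈ Icc 0 δ, u t = u 0 - (∫ s in (0:ℝ)..t, u s * k s) + v t)
    {t : ℝ} (ht : t ∈ Icc 0 δ) : |u t| ≤ |u 0| + C := by
  have h_neg : ∀ t ∈ Icc 0 δ,
      -u t = -u 0 - (∫ s in (0:ℝ)..t, -u s * k s) + -v t := fun t ht => by
    simp only [neg_mul, integral_neg]
    linarith [h t ht]
  have hupper := le_abs_add_of_forall_eq_sub_integral_mul hu hk hk_nonneg
    (fun r hr s hs => (le_abs_self _).trans (hv r hr s hs)) h ht
  have hlower : -u t ≤ |-u 0| + C := le_abs_add_of_forall_eq_sub_integral_mul hu.neg hk hk_nonneg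
    (fun r hr s hs => by linarith [neg_le_abs (v s - v r), hv r hr s hs]) h_neg ht
  rw [abs_neg] at hlower
  exact abs_le.2 ⟨by linarith, hupper⟩

end IntegralEquation

theorem stmt_3_general (δ σ : ℝ) (hσ : 0 ≤ σ)
    (u₀ u₁ w : ℝ → ℝ)
    (hu₀ : ContinuousOn u₀ (Set.Icc 0 δ))
    (hu₁ : ContinuousOn u₁ (Set.Icc 0 δ))
    (hu₁pos : ∀ s ∈ Set.Icc (0:ℝ) δ, 0 ≤ u₁ s)
    (hw : ContinuousOn w (Set.Icc 0 δ))
    (heq : ∀ t ∈ Set.Icc (0:ℝ) δ,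
      u₀ t = u₀ 0 - (∫ s in (0:ℝ)..t, u₀ s * u₁ s) + σ * w t) :
    ∀ t ∈ Set.Icc (0:ℝ) δ,
      |u₀ t| ≤ |u₀ 0| + 2 * σ * sSup ((fun s => |w s|) '' Set.Icc (0:ℝ) δ) := by
  set M := sSup ((fun s => |w s|) '' Set.Icc (0:ℝ) δ)
  have hM : ∀ s ∈ Icc (0:ℝ) δ, |w s| ≤ M := fun s hs =>
    le_csSup (isCompact_Icc.image_of_continuousOn hw.abs).bddAbove ⟨s, hs, rfl⟩
  refine fun t ht => abs_le_abs_add_of_forall_eq_sub_integral_mul hu₀ hu₁ hu₁pos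
    (fun r hr s hs => ?_) heq ht
  calc |σ * w s - σ * w r| = σ * |w s - w r| := by
        rw [← mul_sub, abs_mul, abs_of_nonneg hσ]
    _ ≤ σ * (M + M) := by
        gcongr
        exact (abs_sub _ _).trans (add_le_add (hM s hs) (hM r hr))
    _ = 2 * σ * M := by ring

theorem stmt_3 (δ σ : ℝ) (hδ : 0 ≤ δ) (hσ : 0 ≤ σ)
    (u₀ u₁ w : ℝ → ℝ)
    (hu₀ : ContinuousOn u₀ (Set.Icc 0 δ))
    (hu₁ : ContinuousOn u₁ (Set.Icc 0 δ))
    (hu₁pos : ∀ s ∈ Set.Icc (0:ℝ) δ, 0 ≤ u₁ s)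
    (hw : ContinuousOn w (Set.Icc 0 δ)) (hw0 : w 0 = 0)
    (heq : ∀ t ∈ Set.Icc (0:ℝ) δ,
      u₀ t = u₀ 0 - (∫ s in (0:ℝ)..t, u₀ s * u₁ s) + σ * w t) :
    ∀ t ∈ Set.Icc (0:ℝ) δ,
      |u₀ t| ≤ |u₀ 0| + 2 * σ * sSup ((fun s => |w s|) '' Set.Icc (0:ℝ) δ) :=
  stmt_3_general δ σ hσ u₀ u₁ w hu₀ hu₁ hu₁pos hw heq
end

section
/- Let u and ũ be two solutions of the deterministic dyadic system with the same continuous forcing w and initial data in H₊, and set z_j = u_j − ũ_j, y_j = u_j + ũ_j. Then the quantity ψ_n(t) = ∑_{j=0}^n z_j(t)²/2^j satisfies, for c ≥ 1, the identity ψ_n(t) − ψ_n(0) = −∫₀ᵗ ∑_{j=0}^n 2^{(c−1)j} z_j(s)² y_{j+1}(s) ds − ∫₀ᵗ 2^{(c−1)n} z_n(s) z_{n+1}(s) y_n(s) ds. -/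
/-!
With `z = u - v` and `y = u + v`, the forcing `σ w` cancels in `z₀`, and every mode obeys
`(z_j² / 2^j)' = -2^{(c-1)j} z_j² y_{j+1} - Φ_j + Φ_{j-1}` with the flux
`Φ_j = 2^{(c-1)j} z_j z_{j+1} y_j` (and `Φ_{-1} = 0`), because
`u_j u_{j+1} - v_j v_{j+1} = (z_j y_{j+1} + z_{j+1} y_j) / 2` and `u_j² - v_j² = z_j y_j`.
Summing over `j ≤ n` telescopes the fluxes to `-Φ_n`, and the identity is the fundamental
theorem of calculus.
-/

open Set Finset MeasureTheory Filter Topology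

lemma hasDerivAt_of_eq_add_integral {f g : ℝ → ℝ} {a b C s : ℝ}
    (hg : ContinuousOn g (Icc a b)) (hf : ∀ r ∈ Icc a b, f r = C + ∫ x in a..r, g x)
    (hs : s ∈ Ioo a b) : HasDerivAt f (g s) s := by
  have hnhds : Icc a b ∈ 𝓝 s := Icc_mem_nhds hs.1 hs.2
  have hint : IntervalIntegrable g volume a s :=
    (hg.mono (Icc_subset_Icc_right hs.2.le)).intervalIntegrable_of_Icc hs.1.le
  have hderiv := intervalIntegral.integral_hasDerivAt_right hint
    ⟨Icc a b, hnhds, hg.aestronglyMeasurable measurableSet_Icc⟩ (hg.continuousAt hnhds)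
  exact (hderiv.const_add C).congr_of_eventuallyEq (eventuallyEq_of_mem hnhds hf)

lemma HasDerivAt.sum_range_telescope {F : ℕ → ℝ → ℝ} {a b : ℕ → ℝ} {s : ℝ}
    (h0 : HasDerivAt (F 0) (-b 0 - a 0) s)
    (hsucc : ∀ j, HasDerivAt (F (j + 1)) (-b (j + 1) - a (j + 1) + a j) s) (n : ℕ) :
    HasDerivAt (fun r => ∑ j ∈ range (n + 1), F j r)
      (-∑ j ∈ range (n + 1), b j - a n) s := by
  induction n with
  | zero => simpa using h0
  | succ n ih =>
    simp_rw [Finset.sum_range_succ _ (n + 1)]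
    exact (ih.fun_add (hsucc n)).congr_deriv (by ring)

lemma two_rpow_mul_natCast (c : ℝ) (m : ℕ) :
    (2 : ℝ) ^ (c * m) = 2 ^ ((c - 1) * m) * 2 ^ m := by
  rw [← Real.rpow_natCast, ← Real.rpow_add two_pos]
  congr 1
  ring

namespace DyadicModel

def SolvesAt (c : ℝ) (u : ℕ → ℝ → ℝ) (s : ℝ) : Prop :=
  ∀ j, 1 ≤ j → HasDerivAt (u j)
    (-(2 : ℝ) ^ (c * j) * u j s * u (j + 1) s
      + (2 : ℝ) ^ (c * (j - 1 : ℝ)) * (u (j - 1) s) ^ 2) s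

noncomputable def dissipation (c : ℝ) (u v : ℕ → ℝ → ℝ) (j : ℕ) (s : ℝ) : ℝ :=
  (2 : ℝ) ^ ((c - 1) * j) * (u j s - v j s) ^ 2 * (u (j + 1) s + v (j + 1) s)

noncomputable def flux (c : ℝ) (u v : ℕ → ℝ → ℝ) (j : ℕ) (s : ℝ) : ℝ :=
  (2 : ℝ) ^ ((c - 1) * j) * (u j s - v j s) * (u (j + 1) s - v (j + 1) s) * (u j s + v j s)

variable {c T : ℝ} {u v : ℕ → ℝ → ℝ}

lemma continuousOn_dissipation (hu : ∀ j, ContinuousOn (u j) (Icc 0 T))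
    (hv : ∀ j, ContinuousOn (v j) (Icc 0 T)) (j : ℕ) :
    ContinuousOn (dissipation c u v j) (Icc 0 T) :=
  (continuousOn_const.mul (((hu j).sub (hv j)).pow 2)).mul ((hu (j + 1)).add (hv (j + 1)))

lemma continuousOn_flux (hu : ∀ j, ContinuousOn (u j) (Icc 0 T))
    (hv : ∀ j, ContinuousOn (v j) (Icc 0 T)) (j : ℕ) :
    ContinuousOn (flux c u v j) (Icc 0 T) :=
  ((continuousOn_const.mul ((hu j).sub (hv j))).mul ((hu (j + 1)).sub (hv (j + 1)))).mul
    ((hu j).add (hv j))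

lemma hasDerivAt_sub_mode_zero {σ s : ℝ} {w : ℝ → ℝ}
    (hucont : ∀ j, ContinuousOn (u j) (Icc 0 T)) (hvcont : ∀ j, ContinuousOn (v j) (Icc 0 T))
    (hu0 : ∀ t ∈ Icc (0 : ℝ) T,
      u 0 t = u 0 0 - (∫ s in (0 : ℝ)..t, u 0 s * u 1 s) + σ * w t)
    (hv0 : ∀ t ∈ Icc (0 : ℝ) T,
      v 0 t = v 0 0 - (∫ s in (0 : ℝ)..t, v 0 s * v 1 s) + σ * w t)
    (hs : s ∈ Ioo 0 T) :
    HasDerivAt (fun r => u 0 r - v 0 r) (-(u 0 s * u 1 s - v 0 s * v 1 s)) s := by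
  have huu : ContinuousOn (fun r => u 0 r * u 1 r) (Icc 0 T) := (hucont 0).mul (hucont 1)
  have hvv : ContinuousOn (fun r => v 0 r * v 1 r) (Icc 0 T) := (hvcont 0).mul (hvcont 1)
  refine hasDerivAt_of_eq_add_integral (C := u 0 0 - v 0 0)
    (g := fun r => -(u 0 r * u 1 r - v 0 r * v 1 r)) (huu.sub hvv).neg (fun r hr => ?_) hs
  have hsub : Icc 0 r ⊆ Icc 0 T := Icc_subset_Icc_right hr.2
  rw [intervalIntegral.integral_neg,
    intervalIntegral.integral_sub ((huu.mono hsub).intervalIntegrable_of_Icc hr.1)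
      ((hvv.mono hsub).intervalIntegrable_of_Icc hr.1), hu0 r hr, hv0 r hr]
  ring

lemma hasDerivAt_sq_sub_mode_zero {s : ℝ}
    (hz : HasDerivAt (fun r => u 0 r - v 0 r) (-(u 0 s * u 1 s - v 0 s * v 1 s)) s) :
    HasDerivAt (fun r => (u 0 r - v 0 r) ^ 2 / 2 ^ 0)
      (-dissipation c u v 0 s - flux c u v 0 s) s := by
  refine ((hz.pow 2).div_const (2 ^ 0)).congr_deriv ?_
  simp only [dissipation, flux, Nat.cast_zero, mul_zero, Real.rpow_zero]
  ring

lemma hasDerivAt_sq_sub_mode_succ {s : ℝ} (hu : SolvesAt c u s) (hv : SolvesAt c v s) (j : ℕ) :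
    HasDerivAt (fun r => (u (j + 1) r - v (j + 1) r) ^ 2 / 2 ^ (j + 1))
      (-dissipation c u v (j + 1) s - flux c u v (j + 1) s + flux c u v j s) s := by
  have hd := (hu (j + 1) (Nat.le_add_left 1 j)).sub (hv (j + 1) (Nat.le_add_left 1 j))
  rw [Nat.add_sub_cancel, Nat.cast_add_one, add_sub_cancel_right, ← Nat.cast_add_one,
    two_rpow_mul_natCast c (j + 1), two_rpow_mul_natCast c j] at hd
  refine ((hd.pow 2).div_const (2 ^ (j + 1))).congr_deriv ?_
  simp only [dissipation, flux, Pi.sub_apply]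
  push_cast
  field_simp
  ring

end DyadicModel

open DyadicModel in
theorem stmt_10_general (T σ c : ℝ) (w : ℝ → ℝ) (u v : ℕ → ℝ → ℝ)
    (hucont : ∀ j, ContinuousOn (u j) (Set.Icc 0 T))
    (hvcont : ∀ j, ContinuousOn (v j) (Set.Icc 0 T))
    (hu0 : ∀ t ∈ Set.Icc (0:ℝ) T,
      u 0 t = u 0 0 - (∫ s in (0:ℝ)..t, u 0 s * u 1 s) + σ * w t)
    (hv0 : ∀ t ∈ Set.Icc (0:ℝ) T,
      v 0 t = v 0 0 - (∫ s in (0:ℝ)..t, v 0 s * v 1 s) + σ * w t)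
    (huode : ∀ j, 1 ≤ j → ∀ t ∈ Set.Icc (0:ℝ) T,
      HasDerivAt (u j)
        (-(2:ℝ) ^ (c * j) * u j t * u (j + 1) t
          + (2:ℝ) ^ (c * (j - 1 : ℝ)) * (u (j - 1) t) ^ 2) t)
    (hvode : ∀ j, 1 ≤ j → ∀ t ∈ Set.Icc (0:ℝ) T,
      HasDerivAt (v j)
        (-(2:ℝ) ^ (c * j) * v j t * v (j + 1) t
          + (2:ℝ) ^ (c * (j - 1 : ℝ)) * (v (j - 1) t) ^ 2) t) :
    ∀ n : ℕ, ∀ t ∈ Set.Icc (0:ℝ) T,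
      (∑ j ∈ Finset.range (n + 1), (u j t - v j t) ^ 2 / 2 ^ j)
        - (∑ j ∈ Finset.range (n + 1), (u j 0 - v j 0) ^ 2 / 2 ^ j)
      = -(∫ s in (0:ℝ)..t, ∑ j ∈ Finset.range (n + 1),
            (2:ℝ) ^ ((c - 1) * j) * (u j s - v j s) ^ 2 * (u (j + 1) s + v (j + 1) s))
        - ∫ s in (0:ℝ)..t,
            (2:ℝ) ^ ((c - 1) * n) * (u n s - v n s) * (u (n + 1) s - v (n + 1) s)
              * (u n s + v n s) := by
  intro n t ht
  have hsub : Icc 0 t ⊆ Icc 0 T := Icc_subset_Icc_right ht.2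
  have hderiv : ∀ s ∈ Ioo 0 t,
      HasDerivAt (fun r => ∑ j ∈ range (n + 1), (u j r - v j r) ^ 2 / 2 ^ j)
      (-∑ j ∈ range (n + 1), dissipation c u v j s - flux c u v n s) s := by
    intro s hs
    have hsT : s ∈ Ioo 0 T := ⟨hs.1, hs.2.trans_le ht.2⟩
    exact HasDerivAt.sum_range_telescope (F := fun j r => (u j r - v j r) ^ 2 / 2 ^ j)
      (a := fun j => flux c u v j s) (b := fun j => dissipation c u v j s)
      (hasDerivAt_sq_sub_mode_zero (hasDerivAt_sub_mode_zero hucont hvcont hu0 hv0 hsT))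
      (hasDerivAt_sq_sub_mode_succ (fun j hj => huode j hj s (Ioo_subset_Icc_self hsT))
        (fun j hj => hvode j hj s (Ioo_subset_Icc_self hsT))) n
  have hψ : ContinuousOn (fun r => ∑ j ∈ range (n + 1), (u j r - v j r) ^ 2 / 2 ^ j) (Icc 0 t) :=
    (continuousOn_finsetSum _ fun j _ =>
      (((hucont j).sub (hvcont j)).pow 2).div_const _).mono hsub
  have hD :
      IntervalIntegrable (fun s => ∑ j ∈ range (n + 1), dissipation c u v j s) volume 0 t :=
    ((continuousOn_finsetSum _ fun j _ => continuousOn_dissipation hucont hvcont j).mono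
      hsub).intervalIntegrable_of_Icc ht.1
  have hΦ : IntervalIntegrable (flux c u v n) volume 0 t :=
    ((continuousOn_flux hucont hvcont n).mono hsub).intervalIntegrable_of_Icc ht.1
  have hFTC := intervalIntegral.integral_eq_sub_of_hasDerivAt_of_le ht.1 hψ hderiv (hD.neg.sub hΦ)
  rw [intervalIntegral.integral_sub (f := fun s => -∑ j ∈ range (n + 1), dissipation c u v j s)
    hD.neg hΦ, intervalIntegral.integral_neg] at hFTC
  exact hFTC.symm

theorem stmt_10 (T σ c : ℝ) (hT : 0 ≤ T) (hσ : 0 ≤ σ) (hc : 1 ≤ c)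
    (w : ℝ → ℝ) (hw : Continuous w) (hw0 : w 0 = 0)
    (u v : ℕ → ℝ → ℝ)
    (hucont : ∀ j, ContinuousOn (u j) (Set.Icc 0 T))
    (hvcont : ∀ j, ContinuousOn (v j) (Set.Icc 0 T))
    (hupos : ∀ j, 1 ≤ j → ∀ t ∈ Set.Icc (0:ℝ) T, 0 ≤ u j t)
    (hvpos : ∀ j, 1 ≤ j → ∀ t ∈ Set.Icc (0:ℝ) T, 0 ≤ v j t)
    (hul2 : ∀ t ∈ Set.Icc (0:ℝ) T, Summable fun j => (u j t) ^ 2)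
    (hvl2 : ∀ t ∈ Set.Icc (0:ℝ) T, Summable fun j => (v j t) ^ 2)
    (hu0 : ∀ t ∈ Set.Icc (0:ℝ) T,
      u 0 t = u 0 0 - (∫ s in (0:ℝ)..t, u 0 s * u 1 s) + σ * w t)
    (hv0 : ∀ t ∈ Set.Icc (0:ℝ) T,
      v 0 t = v 0 0 - (∫ s in (0:ℝ)..t, v 0 s * v 1 s) + σ * w t)
    (huode : ∀ j, 1 ≤ j → ∀ t ∈ Set.Icc (0:ℝ) T,
      HasDerivAt (u j)
        (-(2:ℝ) ^ (c * j) * u j t * u (j + 1) t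
          + (2:ℝ) ^ (c * (j - 1 : ℝ)) * (u (j - 1) t) ^ 2) t)
    (hvode : ∀ j, 1 ≤ j → ∀ t ∈ Set.Icc (0:ℝ) T,
      HasDerivAt (v j)
        (-(2:ℝ) ^ (c * j) * v j t * v (j + 1) t
          + (2:ℝ) ^ (c * (j - 1 : ℝ)) * (v (j - 1) t) ^ 2) t) :
    ∀ n : ℕ, ∀ t ∈ Set.Icc (0:ℝ) T,
      (∑ j ∈ Finset.range (n + 1), (u j t - v j t) ^ 2 / 2 ^ j)
        - (∑ j ∈ Finset.range (n + 1), (u j 0 - v j 0) ^ 2 / 2 ^ j)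
      = -(∫ s in (0:ℝ)..t, ∑ j ∈ Finset.range (n + 1),
            (2:ℝ) ^ ((c - 1) * j) * (u j s - v j s) ^ 2 * (u (j + 1) s + v (j + 1) s))
        - ∫ s in (0:ℝ)..t,
            (2:ℝ) ^ ((c - 1) * n) * (u n s - v n s) * (u (n + 1) s - v (n + 1) s)
              * (u n s + v n s) :=
  stmt_10_general T σ c w u v hucont hvcont hu0 hv0 huode hvode
end
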